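/- External context read-back: let X be a set of jobs with pairwise distinct names and let B be an approximant with no repeated names such that fn(B) \ names(X) = {α}. Then B⟦X⟧[α := ⟨·⟩] is an external context. Likewise, if S is a rigid approximant with no repeated names and fn(S) \ names(X) = {α}, then S⟦X⟧[α := ⟨·⟩] is a rigid context. -/

import Mathlib

set_option maxHeartbeats 1000000

/-- λ-terms extended with named holes (named multi-contexts).
    A pure λ-term is a `Tm` satisfying `Tm.NoHole`. -/
inductive Tm where
  | var : ℕ → Tm
  | lam : ℕ → Tm → Tm
  | app : Tm → Tm → Tm
  | hole : ℕ → Tm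
deriving DecidableEq

namespace Tm

def size : Tm → ℕ
  | var _ => 1
  | hole _ => 1
  | lam _ t => t.size + 1
  | app t u => t.size + u.size + 1

/-- Renaming of the free variable `y` to `z` (intended for fresh `z`). -/
def rename (y z : ℕ) : Tm → Tm
  | var w => if w = y then var z else var w
  | hole a => hole a
  | lam w t => if w = y then lam w t else lam w (rename y z t)
  | app t u => app (rename y z t) (rename y z u)

theorem size_rename (y z : ℕ) : ∀ t : Tm, (rename y z t).size = t.size
  | var w => by by_cases h : w = y <;> simp [rename, h, size]
  | hole _ => rfl
  | lam w t => by
      by_cases h : w = y <;> simp [rename, h, size, size_rename y z t]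
  | app t u => by simp [rename, size, size_rename y z t, size_rename y z u]

/-- Free variables. -/
def fv : Tm → List ℕ
  | var w => [w]
  | hole _ => []
  | lam w t => (fv t).filter (fun v => v ≠ w)
  | app t u => fv t ++ fv u

/-- All variables occurring (free, bound and binders). -/
def allVars : Tm → List ℕ
  | var w => [w]
  | hole _ => []
  | lam w t => w :: allVars t
  | app t u => allVars t ++ allVars u

/-- The binders of a term, in order. -/
def binders : Tm → List ℕ
  | var _ => []
  | hole _ => []
  | lam w t => w :: binders t
  | app t u => binders t ++ binders u

/-- Names of the holes, in order. -/
def holes : Tm → List ℕ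
  | var _ => []
  | hole a => [a]
  | lam _ t => holes t
  | app t u => holes t ++ holes u

/-- A pure λ-term: no named holes. -/
def NoHole (t : Tm) : Prop := t.holes = []

/-- Well-named: pairwise distinct bound names. -/
def WellNamed (t : Tm) : Prop := t.binders.Nodup

/-- A variable fresh for the given list. -/
def freshVar (l : List ℕ) : ℕ := (l.foldr max 0) + 1

/-- Capture-avoiding substitution `t{x := u}` (as `Tm.subst x u t`). -/
def subst (x : ℕ) (u : Tm) : Tm → Tm
  | var w => if w = x then u else var w
  | hole a => hole a
  | app t v => app (subst x u t) (subst x u v)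
  | lam w t =>
      if w = x then lam w t
      else if w ∈ u.fv then
        let z := freshVar (x :: (u.fv ++ t.fv ++ [w]))
        lam z (subst x u (rename w z t))
      else lam w (subst x u t)
  termination_by t => t.size
  decreasing_by all_goals simp [size, size_rename] <;> omega

/-- Capture-allowing plugging of `c` for the hole named `a` (as `Tm.plug a c t`). -/
def plug (a : ℕ) (c : Tm) : Tm → Tm
  | var w => var w
  | hole b => if b = a then c else hole b
  | lam w t => lam w (plug a c t)
  | app t u => app (plug a c t) (plug a c u)

end Tm

/-- α-equivalence (generating relation). -/
inductive Alpha : Tm → Tm → Prop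
  | var (x : ℕ) : Alpha (.var x) (.var x)
  | hole (a : ℕ) : Alpha (.hole a) (.hole a)
  | app {t t' u u' : Tm} : Alpha t t' → Alpha u u' → Alpha (.app t u) (.app t' u')
  | lam (x y : ℕ) (t u : Tm) :
      (∀ z, z ∉ t.allVars → z ∉ u.allVars → Alpha (t.rename x z) (u.rename y z)) →
      Alpha (.lam x t) (.lam y u)

/-- α-equivalence, as an equivalence relation. -/
def AEq : Tm → Tm → Prop := Relation.EqvGen Alpha

/-- Root β-reduction: (λx.t)u ↦β t{x:=u}. -/
inductive Root : Tm → Tm → Prop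
  | beta (x : ℕ) (t u : Tm) : Root (.app (.lam x t) u) (Tm.subst x u t)

/-- One-hole contexts. -/
inductive Ctx where
  | hole : Ctx
  | lam : ℕ → Ctx → Ctx
  | appL : Ctx → Tm → Ctx
  | appR : Tm → Ctx → Ctx

/-- Plugging a term in a one-hole context. -/
def Ctx.fill : Ctx → Tm → Tm
  | .hole, t => t
  | .lam x C, t => .lam x (C.fill t)
  | .appL C u, t => .app (C.fill t) u
  | .appR u C, t => .app u (C.fill t)

/-- β-reduction: closure of root β under arbitrary contexts. -/
def Beta (t u : Tm) : Prop :=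
  ∃ (C : Ctx) (a b : Tm), Root a b ∧ t = C.fill a ∧ u = C.fill b

mutual
  /-- NeutralTm terms: n ::= x | n f. -/
  inductive NeutralTm : Tm → Prop
    | var (x : ℕ) : NeutralTm (.var x)
    | app {n f : Tm} : NeutralTm n → NormalTm f → NeutralTm (.app n f)
  /-- NormalTm forms: f ::= n | λx.f. -/
  inductive NormalTm : Tm → Prop
    | neu {n : Tm} : NeutralTm n → NormalTm n
    | lam (x : ℕ) {f : Tm} : NormalTm f → NormalTm (.lam x f)
end

/-- Rigid terms: r ::= x | r t. -/
inductive RigidTm : Tm → Prop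
  | var (x : ℕ) : RigidTm (.var x)
  | app {r t : Tm} : RigidTm r → RigidTm (.app r t)

mutual
  /-- NeutralTm contexts: N ::= ⟨·⟩ | n L | N t. -/
  inductive NeutralCtx : Ctx → Prop
    | hole : NeutralCtx .hole
    | appR {n : Tm} {L : Ctx} : NeutralTm n → LeftmostCtx L → NeutralCtx (.appR n L)
    | appL {N : Ctx} {t : Tm} : NeutralCtx N → NeutralCtx (.appL N t)
  /-- Leftmost contexts: L ::= N | λx.L. -/
  inductive LeftmostCtx : Ctx → Prop
    | neu {N : Ctx} : NeutralCtx N → LeftmostCtx N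
    | lam (x : ℕ) {L : Ctx} : LeftmostCtx L → LeftmostCtx (.lam x L)
end

mutual
  /-- Rigid contexts: S ::= ⟨·⟩ | r B | S t. -/
  inductive RigidCtx : Ctx → Prop
    | hole : RigidCtx .hole
    | appR {r : Tm} {B : Ctx} : RigidTm r → ExtCtx B → RigidCtx (.appR r B)
    | appL {S : Ctx} {t : Tm} : RigidCtx S → RigidCtx (.appL S t)
  /-- External contexts: B ::= S | λx.B. -/
  inductive ExtCtx : Ctx → Prop
    | rig {S : Ctx} : RigidCtx S → ExtCtx S
    | lam (x : ℕ) {B : Ctx} : ExtCtx B → ExtCtx (.lam x B)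
end

/-- Leftmost(-outermost) reduction: closure of root β under leftmost contexts. -/
def LoStep (t u : Tm) : Prop :=
  ∃ (C : Ctx) (a b : Tm), LeftmostCtx C ∧ Root a b ∧ t = C.fill a ∧ u = C.fill b

/-- External reduction: closure of root β under external contexts. -/
def XStep (t u : Tm) : Prop :=
  ∃ (C : Ctx) (a b : Tm), ExtCtx C ∧ Root a b ∧ t = C.fill a ∧ u = C.fill b

/-- External reduction, on α-equivalence classes (via representatives). -/
def XStepA (t u : Tm) : Prop := ∃ t' u', AEq t t' ∧ XStep t' u' ∧ AEq u' u

/-- Leftmost reduction, on α-equivalence classes (via representatives). -/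
def LoStepA (t u : Tm) : Prop := ∃ t' u', AEq t t' ∧ LoStep t' u' ∧ AEq u' u

/-- `NSteps r k a b`: a sequence of exactly `k` `r`-steps from `a` to `b`. -/
inductive NSteps {α : Type*} (r : α → α → Prop) : ℕ → α → α → Prop
  | refl (a : α) : NSteps r 0 a a
  | step {a b c : α} {n : ℕ} : r a b → NSteps r n b c → NSteps r (n + 1) a c

/-! ### The Set EXAM -/

mutual
  /-- Rigid approximants: S ::= x | S B. -/
  inductive RigidApx : Tm → Prop
    | var (x : ℕ) : RigidApx (.var x)
    | app {S B : Tm} : RigidApx S → Apx B → RigidApx (.app S B)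
  /-- Approximants: B ::= ⟨·⟩α | S | λx.B. -/
  inductive Apx : Tm → Prop
    | hole (a : ℕ) : Apx (.hole a)
    | rig {S : Tm} : RigidApx S → Apx S
    | lam (x : ℕ) {B : Tm} : Apx B → Apx (.lam x B)
end

/-- The multi-context x ⟨·⟩β₁ … ⟨·⟩βₙ. -/
def mkHoles (x : ℕ) (bs : List ℕ) : Tm :=
  bs.foldl (fun acc b => Tm.app acc (Tm.hole b)) (Tm.var x)

/-- A named job (t, S)α. -/
structure Job where
  name : ℕ
  tm : Tm
  stk : List Tm
deriving DecidableEq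

/-- Environments: lists of entries [x ← t]. -/
abbrev Env := List (ℕ × Tm)

def Env.dom (E : Env) : List ℕ := E.map Prod.fst

def Env.lookup : Env → ℕ → Option Tm
  | [], _ => none
  | (y, t) :: E, x => if x = y then some t else Env.lookup E x

/-- A Set EXAM state: an approximant, a pool of jobs, an environment. -/
structure State where
  apx : Tm
  pool : Set Job
  env : Env

/-- The names of the jobs of a pool. -/
def poolNames (P : Set Job) : Set ℕ := Job.name '' P

/-- The jobs of the pool have pairwise distinct names. -/
def DistinctNames (P : Set Job) : Prop :=
  ∀ j ∈ P, ∀ k ∈ P, j.name = k.name → j = k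

def Job.Wf (j : Job) : Prop := Tm.NoHole j.tm ∧ ∀ t ∈ j.stk, Tm.NoHole t

def Env.Wf (E : Env) : Prop := ∀ p ∈ E, Tm.NoHole p.2

/-- Structural well-formedness of a Set EXAM state: the first component is an
approximant (a multi-context with pairwise distinct hole names), the pool is a
finite set of jobs with pairwise distinct names, and jobs and environment are
made of pure λ-terms. -/
def WfState (s : State) : Prop :=
  Apx s.apx ∧ s.apx.holes.Nodup ∧ s.pool.Finite ∧ DistinctNames s.pool ∧
    (∀ j ∈ s.pool, j.Wf) ∧ s.env.Wf

def Job.vars (j : Job) : Set ℕ :=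
  {v | v ∈ j.tm.allVars ∨ ∃ t ∈ j.stk, v ∈ t.allVars}

def Env.vars (E : Env) : Set ℕ :=
  {v | ∃ p ∈ E, v = p.1 ∨ v ∈ p.2.allVars}

def State.vars (s : State) : Set ℕ :=
  {v | v ∈ s.apx.allVars} ∪ (⋃ j ∈ s.pool, j.vars) ∪ s.env.vars

/-- `R` is a fresh well-named renaming of `t` with respect to the state `s`. -/
def FreshRenaming (t R : Tm) (s : State) : Prop :=
  Alpha t R ∧ R.WellNamed ∧ ∀ v ∈ R.binders, v ∉ s.vars

/-- The set of new jobs (t₁,ε)β₁, …, (tₙ,ε)βₙ. -/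
def newJobs (ts : List Tm) (bs : List ℕ) : Set Job :=
  {j | ∃ p ∈ ts.zip bs, j = ⟨p.2, p.1, []⟩}

/-- Overhead transitions of the Set EXAM: sea@, sub, seaλ, seaV. -/
inductive OStep : State → State → Prop
  | seaApp (B : Tm) (P : Set Job) (E : Env) (t u : Tm) (S : List Tm) (α : ℕ)
      (hα : α ∉ poolNames P) :
      OStep ⟨B, insert ⟨α, .app t u, S⟩ P, E⟩ ⟨B, insert ⟨α, t, u :: S⟩ P, E⟩
  | sub (B : Tm) (P : Set Job) (E : Env) (x : ℕ) (S : List Tm) (α : ℕ) (t R : Tm)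
      (hα : α ∉ poolNames P) (hx : E.lookup x = some t)
      (hR : FreshRenaming t R ⟨B, insert ⟨α, .var x, S⟩ P, E⟩) :
      OStep ⟨B, insert ⟨α, .var x, S⟩ P, E⟩ ⟨B, insert ⟨α, R, S⟩ P, E⟩
  | seaLam (B : Tm) (P : Set Job) (E : Env) (x : ℕ) (t : Tm) (α : ℕ)
      (hα : α ∉ poolNames P) :
      OStep ⟨B, insert ⟨α, .lam x t, []⟩ P, E⟩
            ⟨Tm.plug α (.lam x (.hole α)) B, insert ⟨α, t, []⟩ P, E⟩
  | seaV (B : Tm) (P : Set Job) (E : Env) (x : ℕ) (ts : List Tm) (α : ℕ) (bs : List ℕ)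
      (hα : α ∉ poolNames P) (hx : E.lookup x = none)
      (hlen : bs.length = ts.length) (hnd : bs.Nodup)
      (hfresh : ∀ b ∈ bs, b ∉ B.holes ∧ b ∉ poolNames P ∧ b ≠ α) :
      OStep ⟨B, insert ⟨α, .var x, ts⟩ P, E⟩
            ⟨Tm.plug α (mkHoles x bs) B, newJobs ts bs ∪ P, E⟩

/-- The β-transition of the Set EXAM. -/
inductive BStep : State → State → Prop
  | beta (B : Tm) (P : Set Job) (E : Env) (x : ℕ) (t u : Tm) (S : List Tm) (α : ℕ)
      (hα : α ∉ poolNames P) :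
      BStep ⟨B, insert ⟨α, .lam x t, u :: S⟩ P, E⟩
            ⟨B, insert ⟨α, t, S⟩ P, (x, u) :: E⟩

/-- The transition relation of the Set EXAM. -/
def MStep (s s' : State) : Prop := OStep s s' ∨ BStep s s'

/-- Initialization `t ◦ s`. -/
def Init (t : Tm) (s : State) : Prop :=
  t.NoHole ∧ ∃ (t' : Tm) (α : ℕ), Alpha t t' ∧ t'.WellNamed ∧
    s = ⟨.hole α, {⟨α, t', []⟩}, []⟩

/-- Reachable Set EXAM states. -/
def Reachable (s : State) : Prop :=
  ∃ t s₀, Init t s₀ ∧ Relation.ReflTransGen MStep s₀ s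

/-- t⟦E⟧: applying an environment to a term. -/
def applyEnvT : Tm → Env → Tm
  | t, [] => t
  | t, (x, u) :: E => applyEnvT (Tm.subst x u t) E

/-- The read-back of a job: its term applied, in order, to the stack. -/
def Job.rb (j : Job) : Tm := j.stk.foldl Tm.app j.tm

/-- Applying an environment to both components of a job. -/
def Job.applyEnv (j : Job) (E : Env) : Job :=
  ⟨j.name, applyEnvT j.tm E, j.stk.map (fun t => applyEnvT t E)⟩

/-- Simultaneous plugging of the holes of a multi-context according to `f`. -/
def plugAll (f : ℕ → Option Tm) : Tm → Tm
  | .var x => .var x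
  | .hole a => (f a).getD (.hole a)
  | .lam x t => .lam x (plugAll f t)
  | .app t u => .app (plugAll f t) (plugAll f u)

/-- The (env-applied) read-back of the job of name `a` in the pool `P`, if any. -/
noncomputable def poolFun (P : Set Job) (E : Env) : ℕ → Option Tm := fun a =>
  @dite _ (∃ j, j ∈ P ∧ j.name = a) (Classical.dec _)
    (fun h => some ((h.choose.applyEnv E).rb)) (fun _ => none)

/-- The read-back ⟦s⟧ of a Set EXAM state. -/
noncomputable def State.rb (s : State) : Tm :=
  plugAll (poolFun s.pool s.env) s.apx

/-- Swap of two independent environment entries. -/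
inductive EnvSwap : Env → Env → Prop
  | swap (E E' : Env) (x y : ℕ) (t u : Tm)
      (hx : x ∉ Tm.fv u) (hy : y ∉ Tm.fv t) :
      EnvSwap (E ++ (x, t) :: (y, u) :: E') (E ++ (y, u) :: (x, t) :: E')

/-- ≈: the least equivalence relation containing `EnvSwap`. -/
def EnvEq : Env → Env → Prop := Relation.EqvGen EnvSwap

/-- ≡ on states: equality up to ≈ of the environments. -/
def StateEq (s s' : State) : Prop :=
  s.apx = s'.apx ∧ s.pool = s'.pool ∧ EnvEq s.env s'.env

/-- `Run b o k s s'`: a run from `s` to `s'` with exactly `k` β-transitions. -/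
inductive Run {α : Type*} (b o : α → α → Prop) : ℕ → α → α → Prop
  | refl (a : α) : Run b o 0 a a
  | beta {a a' c : α} {k : ℕ} : b a a' → Run b o k a' c → Run b o (k + 1) a c
  | ov {a a' c : α} {k : ℕ} : o a a' → Run b o k a' c → Run b o k a c

mutual
  /-- `RigidCtxTm α C`: the multi-context `C`, whose only hole is `⟨·⟩α`,
  is a rigid context once `⟨·⟩α` is regarded as the context hole ⟨·⟩. -/
  inductive RigidCtxTm (α : ℕ) : Tm → Prop
    | hole : RigidCtxTm α (.hole α)
    | appR {r B : Tm} : RigidTm r → r.NoHole → ExtCtxTm α B → RigidCtxTm α (.app r B)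
    | appL {S t : Tm} : RigidCtxTm α S → t.NoHole → RigidCtxTm α (.app S t)
  /-- `ExtCtxTm α C`: the multi-context `C`, whose only hole is `⟨·⟩α`,
  is an external context once `⟨·⟩α` is regarded as the context hole ⟨·⟩. -/
  inductive ExtCtxTm (α : ℕ) : Tm → Prop
    | rig {S : Tm} : RigidCtxTm α S → ExtCtxTm α S
    | lam (x : ℕ) {B : Tm} : ExtCtxTm α B → ExtCtxTm α (.lam x B)
end

theorem Tm.size_pos : ∀ t : Tm, 1 ≤ t.size
  | .var _ => le_refl _
  | .hole _ => le_refl _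
  | .lam _ t => by simp [Tm.size]
  | .app _ _ => by simp [Tm.size]

theorem noHole_app {t u : Tm} (ht : t.NoHole) (hu : u.NoHole) : (Tm.app t u).NoHole := by
  simp [Tm.NoHole, Tm.holes] at *; exact ⟨ht, hu⟩

theorem noHole_foldl : ∀ (l : List Tm) (t : Tm), t.NoHole → (∀ u ∈ l, u.NoHole) →
    (l.foldl Tm.app t).NoHole
  | [], t, ht, _ => ht
  | u :: l, t, ht, hl => by
      exact noHole_foldl l (Tm.app t u) (noHole_app ht (hl u (by simp)))
        (fun v hv => hl v (by simp [hv]))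

theorem poolFun_none {X : Set Job} {a : ℕ} (h : a ∉ poolNames X) :
    poolFun X [] a = none := by
  rw [poolFun]
  rw [dif_neg]
  rintro ⟨j, hj, rfl⟩
  exact h ⟨j, hj, rfl⟩

theorem applyEnvT_nil (t : Tm) : applyEnvT t [] = t := rfl

theorem poolFun_some {X : Set Job} (hXwf : ∀ j ∈ X, j.Wf) {a : ℕ}
    (h : a ∈ poolNames X) : ∃ u, poolFun X [] a = some u ∧ u.NoHole := by
  obtain ⟨j, hj, rfl⟩ := h
  have hex : ∃ k, k ∈ X ∧ k.name = j.name := ⟨j, hj, rfl⟩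
  rw [poolFun, dif_pos hex]
  refine ⟨_, rfl, ?_⟩
  have hmem := hex.choose_spec.1
  have hwf := hXwf _ hmem
  simp only [Job.rb, Job.applyEnv, applyEnvT_nil]
  apply noHole_foldl
  · exact hwf.1
  · intro u hu
    simp only [List.mem_map] at hu
    obtain ⟨v, hv, rfl⟩ := hu
    exact hwf.2 v hv

theorem plugAll_noHole (f : ℕ → Option Tm) :
    ∀ t : Tm, (∀ a ∈ t.holes, ∃ u, f a = some u ∧ u.NoHole) → (plugAll f t).NoHole
  | .var x, _ => rfl
  | .hole a, h => by
      obtain ⟨u, hu, hnh⟩ := h a (by simp [Tm.holes])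
      simp [plugAll, hu, hnh]
  | .lam x t, h => by
      simpa [plugAll, Tm.NoHole, Tm.holes] using
        plugAll_noHole f t (fun a ha => h a (by simpa [Tm.holes] using ha))
  | .app t u, h => by
      have ht := plugAll_noHole f t (fun a ha => h a (by simp [Tm.holes, ha]))
      have hu := plugAll_noHole f u (fun a ha => h a (by simp [Tm.holes, ha]))
      exact noHole_app ht hu

theorem rigid_plugAll (f : ℕ → Option Tm) :
    ∀ S : Tm, RigidApx S → RigidTm (plugAll f S)
  | .var x, _ => RigidTm.var x
  | .app S B, h => by
      cases h with
      | app hS hB => exact RigidTm.app (rigid_plugAll f S hS)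

/-- external context read-back. -/
theorem external_context_readback (α : ℕ) (X : Set Job)
    (hX : DistinctNames X) (hXwf : ∀ j ∈ X, j.Wf) :
    (∀ B : Tm, Apx B → B.holes.Nodup →
      {a | a ∈ B.holes} \ poolNames X = {α} →
      ExtCtxTm α (plugAll (poolFun X []) B)) ∧
    (∀ S : Tm, RigidApx S → S.holes.Nodup →
      {a | a ∈ S.holes} \ poolNames X = {α} →
      RigidCtxTm α (plugAll (poolFun X []) S)) := by
  set f := poolFun X [] with hf
  set N := poolNames X with hN
  suffices h : ∀ n (t : Tm), t.size ≤ n →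
      (RigidApx t → t.holes.Nodup → {a | a ∈ t.holes} \ N = {α} →
        RigidCtxTm α (plugAll f t)) ∧
      (Apx t → t.holes.Nodup → {a | a ∈ t.holes} \ N = {α} →
        ExtCtxTm α (plugAll f t)) by
    exact ⟨fun B hB h1 h2 => (h B.size B le_rfl).2 hB h1 h2,
      fun S hS h1 h2 => (h S.size S le_rfl).1 hS h1 h2⟩
  intro n
  induction n with
  | zero => intro t ht; have := t.size_pos; omega
  | succ n ih =>
    intro t ht
    have hrig : RigidApx t → t.holes.Nodup → {a | a ∈ t.holes} \ N = {α} →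
        RigidCtxTm α (plugAll f t) := by
      intro hApx hnd hset
      cases hApx with
      | var x =>
          exfalso
          have : α ∈ ({a | a ∈ (Tm.var x).holes} \ N : Set ℕ) := by
            rw [hset]; rfl
          simp [Tm.holes] at this
      | @app S B hS hB =>
          have hsz : S.size ≤ n ∧ B.size ≤ n := by
            have h1 := S.size_pos; have h2 := B.size_pos
            simp [Tm.size] at ht; omega
          have hnd' : S.holes.Nodup ∧ B.holes.Nodup ∧
              ∀ a ∈ S.holes, a ∉ B.holes := by
            simp only [Tm.holes, List.nodup_append] at hnd
            exact ⟨hnd.1, hnd.2.1, fun a ha hb => hnd.2.2 a ha a hb rfl⟩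
          have hmem : ∀ a, (a ∈ S.holes ∨ a ∈ B.holes) ∧ a ∉ N ↔ a = α := by
            intro a
            have := Set.ext_iff.mp hset a
            simpa [Tm.holes, Set.mem_diff] using this
          have hα : (α ∈ S.holes ∨ α ∈ B.holes) ∧ α ∉ N := (hmem α).mpr rfl
          rcases hα.1 with hαS | hαB
          · -- α in S; B is fully plugged
            have hBsub : ∀ a ∈ B.holes, a ∈ N := by
              intro a ha
              by_contra hna
              have := (hmem a).mp ⟨Or.inr ha, hna⟩
              subst this
              exact hnd'.2.2 a hαS ha
            have hBnh : (plugAll f B).NoHole :=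
              plugAll_noHole f B (fun a ha => poolFun_some hXwf (hBsub a ha))
            have hSset : {a | a ∈ S.holes} \ N = {α} := by
              ext a
              simp only [Set.mem_diff, Set.mem_setOf_eq, Set.mem_singleton_iff]
              constructor
              · rintro ⟨h1, h2⟩; exact (hmem a).mp ⟨Or.inl h1, h2⟩
              · rintro rfl; exact ⟨hαS, hα.2⟩
            exact RigidCtxTm.appL ((ih S hsz.1).1 hS hnd'.1 hSset) hBnh
          · -- α in B; S is fully plugged
            have hSsub : ∀ a ∈ S.holes, a ∈ N := by
              intro a ha
              by_contra hna
              have := (hmem a).mp ⟨Or.inl ha, hna⟩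
              subst this
              exact hnd'.2.2 a ha hαB
            have hSnh : (plugAll f S).NoHole :=
              plugAll_noHole f S (fun a ha => poolFun_some hXwf (hSsub a ha))
            have hBset : {a | a ∈ B.holes} \ N = {α} := by
              ext a
              simp only [Set.mem_diff, Set.mem_setOf_eq, Set.mem_singleton_iff]
              constructor
              · rintro ⟨h1, h2⟩; exact (hmem a).mp ⟨Or.inr h1, h2⟩
              · rintro rfl; exact ⟨hαB, hα.2⟩
            exact RigidCtxTm.appR (rigid_plugAll f S hS) hSnh
              ((ih B hsz.2).2 hB hnd'.2.1 hBset)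
    refine ⟨hrig, ?_⟩
    intro hApx hnd hset
    cases hApx with
    | hole a =>
        have : (α ∈ ({a' | a' ∈ (Tm.hole a).holes} \ N : Set ℕ)) := by
          rw [hset]; rfl
        simp only [Tm.holes, Set.mem_diff, Set.mem_setOf_eq, List.mem_singleton] at this
        obtain ⟨rfl, hnm⟩ := this
        have : plugAll f (Tm.hole α) = Tm.hole α := by
          simp [plugAll, hf, poolFun_none hnm]
        rw [this]
        exact ExtCtxTm.rig RigidCtxTm.hole
    | rig hS => exact ExtCtxTm.rig (hrig hS hnd hset)
    | @lam x B hB =>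
        have hsz : B.size ≤ n := by simp [Tm.size] at ht; omega
        exact ExtCtxTm.lam x ((ih B hsz).2 hB (by simpa [Tm.holes] using hnd)
          (by simpa [Tm.holes] using hset))
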